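/- A third-order quaternion tensor A ∈ ℍ^{n×n×n₃} is unitary if and only if diag(Â)·diag(Â)* = diag(Â)*·diag(Â) = I_{nn₃}, where Â is the mode-3 quaternion DFT of A; equivalently, if and only if every frontal slice of Â is a unitary quaternion matrix. -/

import Mathlib

open Matrix Kronecker

noncomputable section

/-- The real quaternions. -/
abbrev Quat := Quaternion ℝ

/-- The embedding of `ℂ` into the quaternions (via `1` and `i`). -/
def c2q (z : ℂ) : Quat := ⟨z.re, z.im, 0, 0⟩

/-- The quaternion imaginary unit `j`. -/
def jH : Quat := ⟨0, 0, 1, 0⟩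

/-- The first complex component of a quaternion: `q = c2q (qd q) + jH * c2q (qc q)`. -/
def qd (q : Quat) : ℂ := ⟨q.re, q.imI⟩

/-- The second complex component of a quaternion. -/
def qc (q : Quat) : ℂ := ⟨q.imJ, -q.imK⟩

/-- A third-order tensor, given by its family of frontal slices. -/
abbrev Tensor (α : Type*) (n₁ n₂ n₃ : ℕ) := Fin n₃ → Matrix (Fin n₁) (Fin n₂) α

/-- The complex tensor `A_d` in the decomposition `A = A_d + j·A_c`. -/
def Td {n₁ n₂ n₃ : ℕ} (A : Tensor Quat n₁ n₂ n₃) : Tensor ℂ n₁ n₂ n₃ :=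
  fun k i j => qd (A k i j)

/-- The complex tensor `A_c` in the decomposition `A = A_d + j·A_c`. -/
def Tc {n₁ n₂ n₃ : ℕ} (A : Tensor Quat n₁ n₂ n₃) : Tensor ℂ n₁ n₂ n₃ :=
  fun k i j => qc (A k i j)

/-- The normalized `n × n` DFT matrix (0-indexed). -/
def Fmat (n : ℕ) : Matrix (Fin n) (Fin n) ℂ :=
  fun s t => (((Real.sqrt (n : ℝ)) : ℂ))⁻¹ *
    Complex.exp ((-2 * (Real.pi : ℂ) * Complex.I * ((s : ℕ) : ℂ) * ((t : ℕ) : ℂ)) / (n : ℂ))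

/-- The flip permutation matrix `P_n` (0-indexed: `P_{s,t} = 1` iff `s + t ≡ 0 (mod n)`). -/
def Pmat (n : ℕ) : Matrix (Fin n) (Fin n) ℂ :=
  fun s t => if ((s : ℕ) + (t : ℕ)) % n = 0 then 1 else 0

/-- Left scalar multiplication of a quaternion matrix by a quaternion. -/
def lsmul {m n : Type*} (q : Quat) (M : Matrix m n Quat) : Matrix m n Quat :=
  fun i j => q * M i j

/-- Right scalar multiplication of a quaternion matrix by a quaternion. -/
def rsmul {m n : Type*} (q : Quat) (M : Matrix m n Quat) : Matrix m n Quat :=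
  fun i j => M i j * q

/-- The block circulant matrix of a third-order tensor. -/
def bcirc {α : Type*} {n₁ n₂ n₃ : ℕ} (T : Tensor α n₁ n₂ n₃) :
    Matrix (Fin n₃ × Fin n₁) (Fin n₃ × Fin n₂) α :=
  fun p q => T (p.1 - q.1) p.2 q.2

/-- The z-block circulant matrix `bcirc_z(A) = bcirc(A_d) + j·bcirc(A_c)·(P_{n₃} ⊗ I_{n₂})`. -/
def bcircz {n₁ n₂ n₃ : ℕ} (A : Tensor Quat n₁ n₂ n₃) :
    Matrix (Fin n₃ × Fin n₁) (Fin n₃ × Fin n₂) Quat :=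
  (bcirc (Td A)).map c2q +
    lsmul jH ((bcirc (Tc A) * (Pmat n₃ ⊗ₖ (1 : Matrix (Fin n₂) (Fin n₂) ℂ))).map c2q)

/-- `unfold`: stack the frontal slices vertically. -/
def unfoldT {α : Type*} {n₁ n₂ n₃ : ℕ} (T : Tensor α n₁ n₂ n₃) :
    Matrix (Fin n₃ × Fin n₁) (Fin n₂) α :=
  fun p j => T p.1 p.2 j

/-- `fold`: the inverse of `unfold`. -/
def foldT {α : Type*} {n₁ n₂ n₃ : ℕ} (M : Matrix (Fin n₃ × Fin n₁) (Fin n₂) α) :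
    Tensor α n₁ n₂ n₃ :=
  fun k i j => M (k, i) j

/-- The QT-product `A *_Q B = fold(bcirc_z(A)·unfold(B))`. -/
def qtmul {n₁ r n₂ n₃ : ℕ} (A : Tensor Quat n₁ r n₃) (B : Tensor Quat r n₂ n₃) :
    Tensor Quat n₁ n₂ n₃ :=
  foldT (bcircz A * unfoldT B)

/-- The mode-3 quaternion DFT
`Â(i,j,:) = √n₃·F_{n₃}·A_d(i,j,:) + j·√n₃·P_{n₃}·F_{n₃}·A_c(i,j,:)`, tube-wise. -/
def hatT {n₁ n₂ n₃ : ℕ} (A : Tensor Quat n₁ n₂ n₃) : Tensor Quat n₁ n₂ n₃ :=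
  fun k i j =>
    c2q (((Real.sqrt (n₃ : ℝ)) : ℂ) * ∑ t, Fmat n₃ k t * Td A t i j) +
    jH * c2q (((Real.sqrt (n₃ : ℝ)) : ℂ) * ∑ t, (Pmat n₃ * Fmat n₃) k t * Tc A t i j)

/-- `diag(Â)`: the block diagonal matrix with the frontal slices as diagonal blocks. -/
def blkDiag {α : Type*} [Zero α] {n₁ n₂ n₃ : ℕ} (T : Tensor α n₁ n₂ n₃) :
    Matrix (Fin n₃ × Fin n₁) (Fin n₃ × Fin n₂) α :=
  fun p q => if p.1 = q.1 then T p.1 p.2 q.2 else 0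

/-- Conjugate transpose of a complex tensor: conjugate-transpose each slice and
reverse the order of slices `2,…,n₃` (i.e. slice `k ↦ -k` in 0-indexing). -/
def cConjT {n₁ n₂ n₃ : ℕ} (T : Tensor ℂ n₁ n₂ n₃) : Tensor ℂ n₂ n₁ n₃ :=
  fun k => (T (-k))ᴴ

/-- Conjugate transpose of a quaternion tensor, defined by
`unfold(A*) = unfold(A_d*) − (P_{n₃} ⊗ I_{n₂})·unfold(A_c*)·j`. -/
def tConjT {n₁ n₂ n₃ : ℕ} (A : Tensor Quat n₁ n₂ n₃) : Tensor Quat n₂ n₁ n₃ :=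
  foldT ((unfoldT (cConjT (Td A))).map c2q -
    rsmul jH (((Pmat n₃ ⊗ₖ (1 : Matrix (Fin n₂) (Fin n₂) ℂ)) *
      unfoldT (cConjT (Tc A))).map c2q))

/-- The identity tensor: identity matrix as first frontal slice, zero elsewhere. -/
def idT (n n₃ : ℕ) : Tensor Quat n n n₃ :=
  fun k => if (k : ℕ) = 0 then (1 : Matrix (Fin n) (Fin n) Quat) else 0

/-- A quaternion tensor is unitary if `U* *_Q U = U *_Q U* = I`. -/
def IsUnitaryT {n n₃ : ℕ} (U : Tensor Quat n n n₃) : Prop :=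
  qtmul (tConjT U) U = idT n n₃ ∧ qtmul U (tConjT U) = idT n n₃

/-- A quaternion tensor is Hermitian if `H* = H`. -/
def IsHermitianT {n n₃ : ℕ} (H : Tensor Quat n n n₃) : Prop := tConjT H = H

/-- A quaternion matrix `M` is positive semidefinite if `x*·M·x` is a nonnegative
real number for every quaternion vector `x`. -/
def IsPSDMat {m : Type*} [Fintype m] (M : Matrix m m Quat) : Prop :=
  ∀ x : m → Quat, ∃ r : ℝ, 0 ≤ r ∧ (star x) ⬝ᵥ M.mulVec x = (r : Quat)
open scoped Quaternion

@[simp] lemma c2q_re (z : ℂ) : (c2q z).re = z.re := rfl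
@[simp] lemma c2q_imI (z : ℂ) : (c2q z).imI = z.im := rfl
@[simp] lemma c2q_imJ (z : ℂ) : (c2q z).imJ = 0 := rfl
@[simp] lemma c2q_imK (z : ℂ) : (c2q z).imK = 0 := rfl
@[simp] lemma jH_re : jH.re = 0 := rfl
@[simp] lemma jH_imI : jH.imI = 0 := rfl
@[simp] lemma jH_imJ : jH.imJ = 1 := rfl
@[simp] lemma jH_imK : jH.imK = 0 := rfl

def Pq (a b : ℂ) : Quat := c2q a + jH * c2q b

lemma Pq_def (a b : ℂ) : Pq a b = ⟨a.re, a.im, b.re, -b.im⟩ := by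
  ext <;> simp [Pq]

@[simp] lemma Pq_re (a b : ℂ) : (Pq a b).re = a.re := by simp [Pq]
@[simp] lemma Pq_imI (a b : ℂ) : (Pq a b).imI = a.im := by simp [Pq]
@[simp] lemma Pq_imJ (a b : ℂ) : (Pq a b).imJ = b.re := by simp [Pq]
@[simp] lemma Pq_imK (a b : ℂ) : (Pq a b).imK = -b.im := by simp [Pq]

lemma q_eq_P (q : Quat) : q = Pq (qd q) (qc q) := by
  ext <;> simp [Pq_def, qd, qc]

lemma Pq_inj {a b a' b' : ℂ} (h : Pq a b = Pq a' b') : a = a' ∧ b = b' := by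
  simp only [Quaternion.ext_iff] at h
  simp only [Pq_def] at h
  exact ⟨Complex.ext h.1 h.2.1, Complex.ext h.2.2.1 (by simpa using h.2.2.2)⟩

lemma qd_P (a b : ℂ) : qd (Pq a b) = a := by simp [Pq_def, qd]
lemma qc_P (a b : ℂ) : qc (Pq a b) = b := by simp [Pq_def, qc]

lemma Pq_add (a b c d : ℂ) : Pq a b + Pq c d = Pq (a+c) (b+d) := by
  ext <;> simp <;> ring_nf

lemma Pq_mul (a b c d : ℂ) :
    Pq a b * Pq c d = Pq (a*c - (starRingEnd ℂ) b * d) ((starRingEnd ℂ) a * d + b * c) := by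
  ext <;> simp <;> ring_nf

lemma Pq_star (a b : ℂ) : star (Pq a b) = Pq ((starRingEnd ℂ) a) (-b) := by
  ext <;> simp

lemma Pq_one : Pq 1 0 = 1 := by ext <;> simp [Pq_def]
lemma Pq_zero : Pq 0 0 = 0 := by ext <;> simp [Pq_def]

lemma Pq_sub (a b c d : ℂ) : Pq a b - Pq c d = Pq (a-c) (b-d) := by
  ext <;> simp <;> ring

lemma Pq_sum {ι : Type*} (s : Finset ι) (f g : ι → ℂ) :
    ∑ i ∈ s, Pq (f i) (g i) = Pq (∑ i ∈ s, f i) (∑ i ∈ s, g i) := by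
  induction s using Finset.cons_induction with
  | empty => simp [Pq_zero]
  | cons a s ha ih => simp [Finset.sum_cons, ih, Pq_add]

-- root of unity machinery
def zt (m : ℕ) : ℂ := Complex.exp ((-2) * Real.pi * Complex.I / m)

lemma zt_ne_zero (m : ℕ) : zt m ≠ 0 := Complex.exp_ne_zero _

def ch (m : ℕ) (a : ℤ) : ℂ := zt m ^ a

lemma zt_pow_m {m : ℕ} (hm : 0 < m) : zt m ^ (m : ℕ) = 1 := by
  rw [zt, ← Complex.exp_nat_mul]
  have : (m : ℂ) ≠ 0 := Nat.cast_ne_zero.2 hm.ne'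
  rw [show (m : ℂ) * ((-2) * Real.pi * Complex.I / m) = (-2) * Real.pi * Complex.I by
    field_simp]
  rw [show ((-2 : ℂ)) * Real.pi * Complex.I = -(2 * Real.pi * Complex.I) by ring]
  simp [Complex.exp_neg, Complex.exp_two_pi_mul_I]

lemma ch_add (m : ℕ) (a b : ℤ) : ch m (a + b) = ch m a * ch m b :=
  zpow_add₀ (zt_ne_zero m) a b

lemma ch_m {m : ℕ} (hm : 0 < m) : ch m m = 1 := by
  rw [ch, zpow_natCast, zt_pow_m hm]

lemma ch_mul_m {m : ℕ} (hm : 0 < m) (k : ℤ) : ch m (m * k) = 1 := by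
  rw [ch, _root_.zpow_mul, zpow_natCast, zt_pow_m hm, _root_.one_zpow]

lemma ch_congr {m : ℕ} (hm : 0 < m) {a b : ℤ} (h : a % m = b % m) : ch m a = ch m b := by
  have hd : (m : ℤ) ∣ b - a := Int.ModEq.dvd h
  obtain ⟨k, hk⟩ := hd
  have : a = b + (m : ℤ) * (-k) := by rw [mul_neg, ← hk]; ring
  rw [this, ch_add, ch_mul_m hm, mul_one]

lemma zt_zpow_exp (m : ℕ) (a : ℤ) : ch m a = Complex.exp (a * ((-2) * Real.pi * Complex.I / m)) := by
  rw [ch, zt, ← Complex.exp_int_mul]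

lemma ch_conj (m : ℕ) (a : ℤ) : (starRingEnd ℂ) (ch m a) = ch m (-a) := by
  rw [zt_zpow_exp, zt_zpow_exp, ← Complex.exp_conj]
  congr 1
  simp [Complex.div_re, Complex.div_im, Complex.ext_iff]
  ring

lemma ch_natpow (m : ℕ) (a : ℕ) : zt m ^ a = ch m a := by
  rw [ch, zpow_natCast]

lemma zt_eq_inv (m : ℕ) : zt m = (Complex.exp (2 * Real.pi * Complex.I / m))⁻¹ := by
  rw [zt, ← Complex.exp_neg]
  congr 1
  ring

lemma zt_primitive {m : ℕ} (hm : 0 < m) : IsPrimitiveRoot (zt m) m := by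
  rw [zt_eq_inv]
  exact (Complex.isPrimitiveRoot_exp m hm.ne').inv

lemma orth {m : ℕ} (hm : 0 < m) (s t : Fin m) :
    ∑ k : Fin m, ch m ((k : ℤ) * ((s : ℤ) - (t : ℤ))) = if s = t then (m : ℂ) else 0 := by
  set d : ℤ := (s : ℤ) - (t : ℤ) with hd
  set x : ℂ := ch m d with hx
  have hxk : ∀ k : Fin m, ch m ((k : ℤ) * d) = x ^ (k : ℕ) := by
    intro k
    rw [hx, ch, ch, mul_comm, _root_.zpow_mul, zpow_natCast]
  simp only [hxk]
  rw [Fin.sum_univ_eq_sum_range (fun i => x ^ i)]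
  by_cases hst : s = t
  · simp [hst, hx, hd, ch]
  · simp only [hst, if_false]
    have hxm : x ^ m = 1 := by
      rw [hx, ch, ← zpow_natCast, ← _root_.zpow_mul, mul_comm]
      exact ch_mul_m hm d
    have hx1 : x ≠ 1 := by
      intro h1
      apply hst
      have : zt m ^ (s : ℤ) = zt m ^ (t : ℤ) := by
        have := h1
        rw [hx, ch, hd, zpow_sub₀ (zt_ne_zero m)] at this
        field_simp at this
        exact (div_eq_one_iff_eq (zpow_ne_zero _ (zt_ne_zero m))).mp this
      rw [zpow_natCast, zpow_natCast] at this
      exact Fin.ext ((zt_primitive hm).pow_inj s.isLt t.isLt this)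
    rw [geom_sum_eq hx1, hxm]
    simp

-- Fin modular arithmetic transported to ch
lemma fin_val_add_mod {m : ℕ} (a b : Fin m) :
    ((((a + b : Fin m) : ℕ) : ℤ)) % m = (((a : ℕ) : ℤ) + ((b : ℕ) : ℤ)) % m := by
  have h : ((a + b : Fin m) : ℕ) = ((a : ℕ) + (b : ℕ)) % m := by
    rw [Fin.add_def]
  rw [h]
  push_cast
  exact Int.emod_emod_of_dvd _ dvd_rfl

lemma fin_val_neg_mod {m : ℕ} (a : Fin m) :
    ((((-a : Fin m) : ℕ) : ℤ)) % m = (-((a : ℕ) : ℤ)) % m := by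
  haveI : NeZero m := ⟨a.pos.ne'⟩
  have h0 : ((-a) + a : Fin m) = 0 := neg_add_cancel a
  have h1 : (((-a : Fin m) : ℕ) + (a : ℕ)) % m = 0 := by
    have := congrArg Fin.val h0
    rwa [Fin.val_add, Fin.val_zero] at this
  have h2 : (m : ℤ) ∣ (((-a : Fin m) : ℕ) : ℤ) + ((a : ℕ) : ℤ) := by
    have := Nat.dvd_of_mod_eq_zero h1
    exact_mod_cast Int.natCast_dvd_natCast.mpr this
  have h3 : (m : ℤ) ∣ (-((a : ℕ) : ℤ)) - (((-a : Fin m) : ℕ) : ℤ) := by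
    have : (-((a : ℕ) : ℤ)) - (((-a : Fin m) : ℕ) : ℤ)
        = -((((-a : Fin m) : ℕ) : ℤ) + ((a : ℕ) : ℤ)) := by ring
    rw [this]
    exact dvd_neg.mpr h2
  exact Int.modEq_iff_dvd.mpr h3

lemma fin_val_sub_mod {m : ℕ} (a b : Fin m) :
    ((((a - b : Fin m) : ℕ) : ℤ)) % m = (((a : ℕ) : ℤ) - ((b : ℕ) : ℤ)) % m := by
  haveI : NeZero m := ⟨b.pos.ne'⟩
  rw [sub_eq_add_neg, fin_val_add_mod a (-b), Int.add_emod, fin_val_neg_mod,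
    ← Int.add_emod, ← sub_eq_add_neg]

lemma ch_fin_add {m : ℕ} (hm : 0 < m) (x : ℤ) (a b : Fin m) :
    ch m (x * (((a + b : Fin m) : ℕ) : ℤ)) = ch m (x * a) * ch m (x * b) := by
  rw [← ch_add, ← mul_add]
  exact ch_congr hm (Int.ModEq.mul_left x (fin_val_add_mod a b))

lemma ch_fin_neg {m : ℕ} (hm : 0 < m) (x : ℤ) (a : Fin m) :
    ch m (x * (((-a : Fin m) : ℕ) : ℤ)) = ch m (-(x * a)) := by
  rw [show -(x * (a:ℤ)) = x * (-(a:ℤ)) by ring]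
  exact ch_congr hm (Int.ModEq.mul_left x (fin_val_neg_mod a))

lemma ch_fin_sub {m : ℕ} (hm : 0 < m) (x : ℤ) (a b : Fin m) :
    ch m (x * (((a - b : Fin m) : ℕ) : ℤ)) = ch m (x * a) * ch m (-(x * b)) := by
  rw [← ch_add]
  have h : x * ((a : ℕ) : ℤ) + -(x * ((b : ℕ) : ℤ)) = x * (((a : ℕ) : ℤ) - ((b : ℕ) : ℤ)) := by
    ring
  rw [h]
  exact ch_congr hm (Int.ModEq.mul_left x (fin_val_sub_mod a b))

-- small embedding lemmas
lemma c2q_mul_jH (z : ℂ) : c2q z * jH = jH * c2q ((starRingEnd ℂ) z) := by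
  ext <;> simp

lemma c2q_neg (z : ℂ) : c2q (-z) = - c2q z := by
  ext <;> simp

-- DFT components of the hat transform
def Dd {n₁ n₂ m : ℕ} (A : Tensor Quat n₁ n₂ m) : Tensor ℂ n₁ n₂ m :=
  fun k i j => ∑ t : Fin m, ch m ((k : ℤ) * (t : ℤ)) * Td A t i j

def Dc {n₁ n₂ m : ℕ} (A : Tensor Quat n₁ n₂ m) : Tensor ℂ n₁ n₂ m :=
  fun k i j => ∑ t : Fin m, ch m (-((k : ℤ) * (t : ℤ))) * Tc A t i j

lemma sqrt_mul_F {m : ℕ} (hm : 0 < m) (k t : Fin m) :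
    ((Real.sqrt (m : ℝ) : ℝ) : ℂ) * Fmat m k t = ch m ((k : ℤ) * (t : ℤ)) := by
  rw [Fmat]
  have hs : ((Real.sqrt (m : ℝ) : ℝ) : ℂ) ≠ 0 := by
    simp only [ne_eq, Complex.ofReal_eq_zero]
    positivity
  rw [← mul_assoc, mul_inv_cancel₀ hs, one_mul, zt_zpow_exp]
  congr 1
  push_cast
  ring

lemma Pmat_apply_eq {m : ℕ} (k l : Fin m) : Pmat m k l = if l = -k then 1 else 0 := by
  haveI : NeZero m := ⟨k.pos.ne'⟩
  rw [Pmat]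
  have h : ((k : ℕ) + (l : ℕ)) % m = 0 ↔ l = -k := by
    rw [← Fin.val_add, ← Fin.val_zero m, ← Fin.ext_iff]
    constructor
    · intro h; exact eq_neg_of_add_eq_zero_right h
    · intro h; rw [h]; exact add_neg_cancel k
  simp [h]

lemma Pmat_apply_eq' {m : ℕ} (k l : Fin m) : Pmat m k l = if k = -l then 1 else 0 := by
  rw [Pmat_apply_eq]
  by_cases h : l = -k
  · rw [if_pos h, if_pos (by rw [h, neg_neg])]
  · rw [if_neg h, if_neg (fun hk => h (by rw [hk, neg_neg]))]

lemma PF_apply {m : ℕ} (k t : Fin m) : (Pmat m * Fmat m) k t = Fmat m (-k) t := by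
  rw [Matrix.mul_apply]
  rw [Finset.sum_eq_single (-k)]
  · rw [Pmat_apply_eq]; simp
  · intro s _ hs
    rw [Pmat_apply_eq]
    simp [hs]
  · intro h
    exact absurd (Finset.mem_univ _) h

lemma hat_comp {n₁ n₂ m : ℕ} (hm : 0 < m) (A : Tensor Quat n₁ n₂ m) (k : Fin m)
    (i : Fin n₁) (j : Fin n₂) :
    hatT A k i j = Pq (Dd A k i j) (Dc A k i j) := by
  rw [hatT, Pq]
  have h1 : ((Real.sqrt (m : ℝ) : ℝ) : ℂ) * ∑ t, Fmat m k t * Td A t i j = Dd A k i j := by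
    rw [Finset.mul_sum, Dd]
    refine Finset.sum_congr rfl fun t _ => ?_
    rw [← mul_assoc, sqrt_mul_F hm]
  have h2 : ((Real.sqrt (m : ℝ) : ℝ) : ℂ) * ∑ t, (Pmat m * Fmat m) k t * Tc A t i j
      = Dc A k i j := by
    rw [Finset.mul_sum, Dc]
    refine Finset.sum_congr rfl fun t _ => ?_
    rw [PF_apply, ← mul_assoc, sqrt_mul_F hm]
    have hch : ch m ((((-k : Fin m) : ℕ) : ℤ) * (((t : ℕ)) : ℤ))
        = ch m (-(((k : ℕ) : ℤ) * ((t : ℕ) : ℤ))) := by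
      rw [mul_comm, ch_fin_neg hm]
      congr 1
      ring
    rw [hch]
  rw [h1, h2]

lemma Td_hat {n₁ n₂ m : ℕ} (hm : 0 < m) (A : Tensor Quat n₁ n₂ m) (k i j) :
    Td (hatT A) k i j = Dd A k i j := by
  rw [Td]; rw [hat_comp hm, qd_P]

lemma Tc_hat {n₁ n₂ m : ℕ} (hm : 0 < m) (A : Tensor Quat n₁ n₂ m) (k i j) :
    Tc (hatT A) k i j = Dc A k i j := by
  rw [Tc]; rw [hat_comp hm, qc_P]

lemma bcircz_apply {n₁ n₂ m : ℕ} (A : Tensor Quat n₁ n₂ m) (k : Fin m) (i : Fin n₁)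
    (l : Fin m) (s : Fin n₂) :
    bcircz A (k, i) (l, s) = Pq (Td A (k - l) i s) (Tc A (k + l) i s) := by
  haveI : NeZero m := ⟨k.pos.ne'⟩
  rw [bcircz, Pq]
  simp only [Matrix.add_apply, Matrix.map_apply, lsmul]
  congr 2
  rw [Matrix.mul_apply, Fintype.sum_prod_type]
  have hinner : ∀ l' : Fin m,
      (∑ m' : Fin n₂, bcirc (Tc A) (k, i) (l', m') *
        (Pmat m ⊗ₖ (1 : Matrix (Fin n₂) (Fin n₂) ℂ)) (l', m') (l, s))
      = Tc A (k - l') i s * Pmat m l' l := by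
    intro l'
    rw [Finset.sum_eq_single s]
    · simp [bcirc, Matrix.kroneckerMap_apply, Matrix.one_apply]
    · intro b _ hb
      simp [bcirc, Matrix.kroneckerMap_apply, Matrix.one_apply, hb]
    · intro h; exact absurd (Finset.mem_univ _) h
  simp only [hinner]
  rw [Finset.sum_eq_single (-l)]
  · rw [Pmat_apply_eq']
    simp [sub_neg_eq_add]
  · intro b _ hb
    rw [Pmat_apply_eq', if_neg hb]
    simp
  · intro h; exact absurd (Finset.mem_univ _) h

lemma qtmul_comp {n₁ r n₂ m : ℕ} (A : Tensor Quat n₁ r m) (B : Tensor Quat r n₂ m)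
    (k : Fin m) (i : Fin n₁) (j : Fin n₂) :
    qtmul A B k i j =
      Pq (∑ p : Fin m × Fin r, (Td A (k - p.1) i p.2 * Td B p.1 p.2 j -
            (starRingEnd ℂ) (Tc A (k + p.1) i p.2) * Tc B p.1 p.2 j))
         (∑ p : Fin m × Fin r, ((starRingEnd ℂ) (Td A (k - p.1) i p.2) * Tc B p.1 p.2 j +
            Tc A (k + p.1) i p.2 * Td B p.1 p.2 j)) := by
  rw [qtmul, foldT, Matrix.mul_apply, ← Pq_sum]
  apply Finset.sum_congr rfl
  intro p _
  rw [bcircz_apply, unfoldT]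
  conv_lhs => rw [q_eq_P (B p.1 p.2 j)]
  rw [Pq_mul]
  rfl

lemma tConjT_comp {n₁ n₂ m : ℕ} (A : Tensor Quat n₁ n₂ m) (k : Fin m) (i : Fin n₂)
    (j : Fin n₁) :
    tConjT A k i j = Pq ((starRingEnd ℂ) (Td A (-k) j i)) (-(Tc A k j i)) := by
  rw [tConjT, foldT]
  simp only [Matrix.sub_apply, Matrix.map_apply, rsmul]
  have hV : ((Pmat m ⊗ₖ (1 : Matrix (Fin n₂) (Fin n₂) ℂ)) * unfoldT (cConjT (Tc A))) (k, i) j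
      = (starRingEnd ℂ) (Tc A k j i) := by
    rw [Matrix.mul_apply, Fintype.sum_prod_type]
    have hinner : ∀ l : Fin m,
        (∑ s : Fin n₂, (Pmat m ⊗ₖ (1 : Matrix (Fin n₂) (Fin n₂) ℂ)) (k, i) (l, s) *
          unfoldT (cConjT (Tc A)) (l, s) j)
        = Pmat m k l * cConjT (Tc A) l i j := by
      intro l
      rw [Finset.sum_eq_single i]
      · simp [Matrix.kroneckerMap_apply, Matrix.one_apply, unfoldT]
      · intro b _ hb
        simp [Matrix.kroneckerMap_apply, Matrix.one_apply, hb.symm, unfoldT]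
      · intro h; exact absurd (Finset.mem_univ _) h
    simp only [hinner]
    rw [Finset.sum_eq_single (-k)]
    · rw [Pmat_apply_eq]
      simp [cConjT, Matrix.conjTranspose_apply]
    · intro b _ hb
      rw [Pmat_apply_eq, if_neg hb]
      simp
    · intro h; exact absurd (Finset.mem_univ _) h
  rw [hV, c2q_mul_jH, Complex.conj_conj]
  have : unfoldT (cConjT (Td A)) (k, i) j = (starRingEnd ℂ) (Td A (-k) j i) := by
    simp [unfoldT, cConjT, Matrix.conjTranspose_apply]
  rw [this, Pq, c2q_neg, mul_neg, sub_eq_add_neg]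

lemma Td_idT {n m : ℕ} (k : Fin m) (i j : Fin n) :
    Td (idT n m) k i j = (if (k : ℕ) = 0 then (1 : Matrix (Fin n) (Fin n) ℂ) else 0) i j := by
  rw [Td, idT]
  split_ifs with h
  · by_cases hij : i = j <;> simp [Matrix.one_apply, hij, qd, Complex.ext_iff]
  · simp [qd, Complex.ext_iff]

lemma Tc_idT {n m : ℕ} (k : Fin m) (i j : Fin n) : Tc (idT n m) k i j = 0 := by
  rw [Tc, idT]
  split_ifs with h
  · by_cases hij : i = j <;> simp [Matrix.one_apply, hij, qc, Complex.ext_iff]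
  · simp [qc, Complex.ext_iff]

lemma Td_qtmul {n₁ r n₂ m : ℕ} (A : Tensor Quat n₁ r m) (B : Tensor Quat r n₂ m)
    (t : Fin m) (i : Fin n₁) (j : Fin n₂) :
    Td (qtmul A B) t i j =
      ∑ p : Fin m × Fin r, (Td A (t - p.1) i p.2 * Td B p.1 p.2 j -
        (starRingEnd ℂ) (Tc A (t + p.1) i p.2) * Tc B p.1 p.2 j) := by
  rw [Td, qtmul_comp, qd_P]

lemma Tc_qtmul {n₁ r n₂ m : ℕ} (A : Tensor Quat n₁ r m) (B : Tensor Quat r n₂ m)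
    (t : Fin m) (i : Fin n₁) (j : Fin n₂) :
    Tc (qtmul A B) t i j =
      ∑ p : Fin m × Fin r, ((starRingEnd ℂ) (Td A (t - p.1) i p.2) * Tc B p.1 p.2 j +
        Tc A (t + p.1) i p.2 * Td B p.1 p.2 j) := by
  rw [Tc, qtmul_comp, qc_P]

lemma Td_tConjT {n₁ n₂ m : ℕ} (A : Tensor Quat n₁ n₂ m) (t : Fin m) (i : Fin n₂) (j : Fin n₁) :
    Td (tConjT A) t i j = (starRingEnd ℂ) (Td A (-t) j i) := by
  rw [Td, tConjT_comp, qd_P]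

lemma Tc_tConjT {n₁ n₂ m : ℕ} (A : Tensor Quat n₁ n₂ m) (t : Fin m) (i : Fin n₂) (j : Fin n₁) :
    Tc (tConjT A) t i j = -(Tc A t j i) := by
  rw [Tc, tConjT_comp, qc_P]

lemma shift_add {m : ℕ} (hm : 0 < m) (x : ℤ) (l : Fin m) (f : Fin m → ℂ) (c : ℂ) :
    ∑ t : Fin m, ch m (x * (t : ℤ)) * (f (t - l) * c)
      = ch m (x * (l : ℤ)) * c * ∑ u : Fin m, ch m (x * (u : ℤ)) * f u := by
  haveI : NeZero m := ⟨hm.ne'⟩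
  rw [Finset.mul_sum]
  exact (Fintype.sum_equiv (Equiv.addRight l) _ _ fun u => by
    show _ = ch m (x * (((u + l : Fin m) : ℕ) : ℤ)) * (f (u + l - l) * c)
    rw [ch_fin_add hm, add_sub_cancel_right]; ring).symm

lemma shift_sub {m : ℕ} (hm : 0 < m) (x : ℤ) (l : Fin m) (f : Fin m → ℂ) (c : ℂ) :
    ∑ t : Fin m, ch m (x * (t : ℤ)) * (f (t + l) * c)
      = ch m (-(x * (l : ℤ))) * c * ∑ u : Fin m, ch m (x * (u : ℤ)) * f u := by
  haveI : NeZero m := ⟨hm.ne'⟩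
  rw [Finset.mul_sum]
  exact (Fintype.sum_equiv (Equiv.subRight l) _ _ fun u => by
    show _ = ch m (x * (((u - l : Fin m) : ℕ) : ℤ)) * (f (u - l + l) * c)
    rw [ch_fin_sub hm, sub_add_cancel]; ring).symm

lemma conj_Dc {n₁ n₂ m : ℕ} (A : Tensor Quat n₁ n₂ m) (k : Fin m) (i : Fin n₁) (s : Fin n₂) :
    (starRingEnd ℂ) (Dc A k i s)
      = ∑ u : Fin m, ch m ((k : ℤ) * (u : ℤ)) * (starRingEnd ℂ) (Tc A u i s) := by
  rw [Dc, map_sum]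
  refine Finset.sum_congr rfl fun u _ => ?_
  rw [_root_.map_mul, ch_conj, neg_neg]

lemma conj_Dd {n₁ n₂ m : ℕ} (A : Tensor Quat n₁ n₂ m) (k : Fin m) (i : Fin n₁) (s : Fin n₂) :
    (starRingEnd ℂ) (Dd A k i s)
      = ∑ u : Fin m, ch m (-((k : ℤ) * (u : ℤ))) * (starRingEnd ℂ) (Td A u i s) := by
  rw [Dd, map_sum]
  refine Finset.sum_congr rfl fun u _ => ?_
  rw [_root_.map_mul, ch_conj]

lemma conv_d {n₁ r n₂ m : ℕ} (hm : 0 < m) (A : Tensor Quat n₁ r m) (B : Tensor Quat r n₂ m)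
    (k : Fin m) (i : Fin n₁) (j : Fin n₂) :
    Dd (qtmul A B) k i j
      = ∑ s : Fin r, (Dd A k i s * Dd B k s j -
          (starRingEnd ℂ) (Dc A k i s) * Dc B k s j) := by
  rw [Dd]
  simp only [Td_qtmul]
  calc ∑ t : Fin m, ch m ((k : ℤ) * (t : ℤ)) *
          ∑ p : Fin m × Fin r, (Td A (t - p.1) i p.2 * Td B p.1 p.2 j -
            (starRingEnd ℂ) (Tc A (t + p.1) i p.2) * Tc B p.1 p.2 j)
      = ∑ p : Fin m × Fin r, ∑ t : Fin m, ch m ((k : ℤ) * (t : ℤ)) *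
          (Td A (t - p.1) i p.2 * Td B p.1 p.2 j -
            (starRingEnd ℂ) (Tc A (t + p.1) i p.2) * Tc B p.1 p.2 j) := by
        simp only [Finset.mul_sum]
        exact Finset.sum_comm
    _ = ∑ p : Fin m × Fin r,
          (ch m ((k : ℤ) * (p.1 : ℤ)) * Td B p.1 p.2 j *
              ∑ u : Fin m, ch m ((k : ℤ) * (u : ℤ)) * Td A u i p.2 -
           ch m (-((k : ℤ) * (p.1 : ℤ))) * Tc B p.1 p.2 j *
              ∑ u : Fin m, ch m ((k : ℤ) * (u : ℤ)) * (starRingEnd ℂ) (Tc A u i p.2)) := by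
        refine Finset.sum_congr rfl fun p _ => ?_
        simp only [mul_sub]
        rw [Finset.sum_sub_distrib]
        congr 1
        · exact shift_add hm ((k : ℤ)) p.1 (fun u => Td A u i p.2) (Td B p.1 p.2 j)
        · exact shift_sub hm ((k : ℤ)) p.1 (fun u => (starRingEnd ℂ) (Tc A u i p.2))
            (Tc B p.1 p.2 j)
    _ = ∑ s : Fin r, (Dd A k i s * Dd B k s j -
          (starRingEnd ℂ) (Dc A k i s) * Dc B k s j) := by
        rw [Fintype.sum_prod_type, Finset.sum_comm]
        refine Finset.sum_congr rfl fun s _ => ?_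
        rw [Finset.sum_sub_distrib, Dd, Dd, conj_Dc, Dc]
        congr 1
        · rw [Finset.sum_mul_sum]
          rw [Finset.sum_comm]
          refine Finset.sum_congr rfl fun l _ => ?_
          rw [Finset.mul_sum]
          refine Finset.sum_congr rfl fun u _ => ?_
          ring
        · rw [Finset.sum_mul_sum]
          rw [Finset.sum_comm]
          refine Finset.sum_congr rfl fun l _ => ?_
          rw [Finset.mul_sum]
          refine Finset.sum_congr rfl fun u _ => ?_
          ring

lemma conv_c {n₁ r n₂ m : ℕ} (hm : 0 < m) (A : Tensor Quat n₁ r m) (B : Tensor Quat r n₂ m)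
    (k : Fin m) (i : Fin n₁) (j : Fin n₂) :
    Dc (qtmul A B) k i j
      = ∑ s : Fin r, ((starRingEnd ℂ) (Dd A k i s) * Dc B k s j +
          Dc A k i s * Dd B k s j) := by
  rw [Dc]
  simp only [Tc_qtmul]
  have hx : ∀ t : Fin m, -((k : ℤ) * (t : ℤ)) = (-(k : ℤ)) * (t : ℤ) := fun t => by ring
  calc ∑ t : Fin m, ch m (-((k : ℤ) * (t : ℤ))) *
          ∑ p : Fin m × Fin r, ((starRingEnd ℂ) (Td A (t - p.1) i p.2) * Tc B p.1 p.2 j +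
            Tc A (t + p.1) i p.2 * Td B p.1 p.2 j)
      = ∑ p : Fin m × Fin r, ∑ t : Fin m, ch m ((-(k : ℤ)) * (t : ℤ)) *
          ((starRingEnd ℂ) (Td A (t - p.1) i p.2) * Tc B p.1 p.2 j +
            Tc A (t + p.1) i p.2 * Td B p.1 p.2 j) := by
        simp only [Finset.mul_sum, hx]
        exact Finset.sum_comm
    _ = ∑ p : Fin m × Fin r,
          (ch m ((-(k : ℤ)) * (p.1 : ℤ)) * Tc B p.1 p.2 j *
              ∑ u : Fin m, ch m ((-(k : ℤ)) * (u : ℤ)) * (starRingEnd ℂ) (Td A u i p.2) +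
           ch m (-((-(k : ℤ)) * (p.1 : ℤ))) * Td B p.1 p.2 j *
              ∑ u : Fin m, ch m ((-(k : ℤ)) * (u : ℤ)) * Tc A u i p.2) := by
        refine Finset.sum_congr rfl fun p _ => ?_
        simp only [mul_add]
        rw [Finset.sum_add_distrib]
        congr 1
        · exact shift_add hm (-(k : ℤ)) p.1 (fun u => (starRingEnd ℂ) (Td A u i p.2))
            (Tc B p.1 p.2 j)
        · exact shift_sub hm (-(k : ℤ)) p.1 (fun u => Tc A u i p.2) (Td B p.1 p.2 j)
    _ = ∑ s : Fin r, ((starRingEnd ℂ) (Dd A k i s) * Dc B k s j +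
          Dc A k i s * Dd B k s j) := by
        rw [Fintype.sum_prod_type, Finset.sum_comm]
        refine Finset.sum_congr rfl fun s _ => ?_
        rw [Finset.sum_add_distrib, conj_Dd, Dc, Dc, Dd]
        simp only [hx, neg_neg, show ∀ t : Fin m, -((-(k : ℤ)) * (t : ℤ)) = (k : ℤ) * (t : ℤ)
          from fun t => by ring]
        congr 1
        · rw [Finset.sum_mul_sum]
          rw [Finset.sum_comm]
          refine Finset.sum_congr rfl fun l _ => ?_
          rw [Finset.mul_sum]
          refine Finset.sum_congr rfl fun u _ => ?_
          ring
        · rw [Finset.sum_mul_sum]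
          rw [Finset.sum_comm]
          refine Finset.sum_congr rfl fun l _ => ?_
          rw [Finset.mul_sum]
          refine Finset.sum_congr rfl fun u _ => ?_
          ring

lemma hat_mul {n₁ r n₂ m : ℕ} (hm : 0 < m) (A : Tensor Quat n₁ r m) (B : Tensor Quat r n₂ m)
    (k : Fin m) : hatT (qtmul A B) k = hatT A k * hatT B k := by
  funext i j
  rw [Matrix.mul_apply, hat_comp hm]
  have hrhs : ∀ s : Fin r, hatT A k i s * hatT B k s j
      = Pq (Dd A k i s * Dd B k s j - (starRingEnd ℂ) (Dc A k i s) * Dc B k s j)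
           ((starRingEnd ℂ) (Dd A k i s) * Dc B k s j + Dc A k i s * Dd B k s j) := by
    intro s
    rw [hat_comp hm, hat_comp hm, Pq_mul]
  simp only [hrhs]
  rw [Pq_sum, conv_d hm, conv_c hm]

lemma hat_star {n₁ n₂ m : ℕ} (hm : 0 < m) (A : Tensor Quat n₁ n₂ m) (k : Fin m) :
    hatT (tConjT A) k = (hatT A k)ᴴ := by
  haveI : NeZero m := ⟨hm.ne'⟩
  funext i j
  rw [hat_comp hm, Matrix.conjTranspose_apply, hat_comp hm, Pq_star]
  refine congrArg₂ Pq ?_ ?_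
  · rw [Dd, conj_Dd]
    simp only [Td_tConjT]
    refine (Fintype.sum_equiv (Equiv.neg (Fin m)) _ _ fun u => ?_).symm
    show ch m (-((k : ℤ) * (u : ℤ))) * (starRingEnd ℂ) (Td A u j i)
      = ch m ((k : ℤ) * (((-u : Fin m) : ℕ) : ℤ)) * (starRingEnd ℂ) (Td A (-(-u)) j i)
    rw [ch_fin_neg hm, neg_neg]
  · simp only [Dc, Tc_tConjT, mul_neg]
    rw [← Finset.sum_neg_distrib]

lemma hat_id {n m : ℕ} (hm : 0 < m) (k : Fin m) : hatT (idT n m) k = 1 := by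
  haveI : NeZero m := ⟨hm.ne'⟩
  funext i j
  rw [hat_comp hm]
  have hd : Dd (idT n m) k i j = (if i = j then 1 else 0 : ℂ) := by
    rw [Dd, Finset.sum_eq_single (0 : Fin m)]
    · rw [Td_idT]
      simp [ch, Matrix.one_apply]
    · intro t _ ht
      rw [Td_idT, if_neg (fun h0 => ht (Fin.ext (by simpa using h0)))]
      simp
    · intro h; exact absurd (Finset.mem_univ _) h
  have hc : Dc (idT n m) k i j = 0 := by simp [Dc, Tc_idT]
  rw [hd, hc]
  by_cases hij : i = j <;> simp [Matrix.one_apply, hij, Pq_one, Pq_zero]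

lemma hat_inj {n₁ n₂ m : ℕ} (hm : 0 < m) {A B : Tensor Quat n₁ n₂ m}
    (h : ∀ k, hatT A k = hatT B k) : A = B := by
  have hmC : (m : ℂ) ≠ 0 := Nat.cast_ne_zero.2 hm.ne'
  have hDd : ∀ k i j, Dd A k i j = Dd B k i j := fun k i j => by
    have hk := congrFun (congrFun (h k) i) j
    rw [hat_comp hm, hat_comp hm] at hk
    exact (Pq_inj hk).1
  have hDc : ∀ k i j, Dc A k i j = Dc B k i j := fun k i j => by
    have hk := congrFun (congrFun (h k) i) j
    rw [hat_comp hm, hat_comp hm] at hk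
    exact (Pq_inj hk).2
  have key_d : ∀ (C : Tensor Quat n₁ n₂ m) (s : Fin m) (i : Fin n₁) (j : Fin n₂),
      ∑ k : Fin m, ch m (-((k : ℤ) * (s : ℤ))) * Dd C k i j = (m : ℂ) * Td C s i j := by
    intro C s i j
    simp only [Dd, Finset.mul_sum]
    rw [Finset.sum_comm]
    have hin : ∀ t : Fin m,
        ∑ k : Fin m, ch m (-((k : ℤ) * (s : ℤ))) * (ch m ((k : ℤ) * (t : ℤ)) * Td C t i j)
        = (∑ k : Fin m, ch m ((k : ℤ) * ((t : ℤ) - (s : ℤ)))) * Td C t i j := by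
      intro t
      rw [Finset.sum_mul]
      refine Finset.sum_congr rfl fun k _ => ?_
      rw [show (k : ℤ) * ((t : ℤ) - (s : ℤ)) = -((k : ℤ) * (s : ℤ)) + (k : ℤ) * (t : ℤ) by ring,
        ch_add]
      ring
    simp only [hin]
    rw [Finset.sum_eq_single s]
    · rw [orth hm s s, if_pos rfl]
    · intro t _ ht
      rw [orth hm t s, if_neg ht, zero_mul]
    · intro hh; exact absurd (Finset.mem_univ _) hh
  have key_c : ∀ (C : Tensor Quat n₁ n₂ m) (s : Fin m) (i : Fin n₁) (j : Fin n₂),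
      ∑ k : Fin m, ch m ((k : ℤ) * (s : ℤ)) * Dc C k i j = (m : ℂ) * Tc C s i j := by
    intro C s i j
    simp only [Dc, Finset.mul_sum]
    rw [Finset.sum_comm]
    have hin : ∀ t : Fin m,
        ∑ k : Fin m, ch m ((k : ℤ) * (s : ℤ)) * (ch m (-((k : ℤ) * (t : ℤ))) * Tc C t i j)
        = (∑ k : Fin m, ch m ((k : ℤ) * ((s : ℤ) - (t : ℤ)))) * Tc C t i j := by
      intro t
      rw [Finset.sum_mul]
      refine Finset.sum_congr rfl fun k _ => ?_
      rw [show (k : ℤ) * ((s : ℤ) - (t : ℤ)) = (k : ℤ) * (s : ℤ) + -((k : ℤ) * (t : ℤ)) by ring,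
        ch_add]
      ring
    simp only [hin]
    rw [Finset.sum_eq_single s]
    · rw [orth hm s s, if_pos rfl]
    · intro t _ ht
      rw [orth hm s t, if_neg (fun hst => ht hst.symm), zero_mul]
    · intro hh; exact absurd (Finset.mem_univ _) hh
  funext s i j
  have h1 : Td A s i j = Td B s i j := by
    have := (key_d A s i j).symm.trans ((Finset.sum_congr rfl fun k _ => by
      rw [hDd k i j]).trans (key_d B s i j))
    exact mul_left_cancel₀ hmC this
  have h2 : Tc A s i j = Tc B s i j := by
    have := (key_c A s i j).symm.trans ((Finset.sum_congr rfl fun k _ => by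
      rw [hDc k i j]).trans (key_c B s i j))
    exact mul_left_cancel₀ hmC this
  rw [q_eq_P (A s i j), q_eq_P (B s i j)]
  show Pq (Td A s i j) (Tc A s i j) = Pq (Td B s i j) (Tc B s i j)
  rw [h1, h2]

lemma blkDiag_mul {n m : ℕ} (X Y : Tensor Quat n n m) :
    blkDiag X * blkDiag Y = blkDiag (fun k => X k * Y k) := by
  funext p q
  obtain ⟨k, i⟩ := p; obtain ⟨l, j⟩ := q
  rw [Matrix.mul_apply, Fintype.sum_prod_type]
  by_cases hkl : k = l
  · subst hkl
    rw [show blkDiag (fun k => X k * Y k) (k, i) (k, j) = (X k * Y k) i j from if_pos rfl,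
      Matrix.mul_apply, Finset.sum_eq_single k]
    · simp [blkDiag]
    · intro t _ ht
      simp [blkDiag, Ne.symm ht]
    · intro h; exact absurd (Finset.mem_univ _) h
  · rw [show blkDiag (fun k => X k * Y k) (k, i) (l, j) = 0 from if_neg hkl]
    apply Finset.sum_eq_zero; intro t _
    apply Finset.sum_eq_zero; intro s _
    by_cases h1 : k = t
    · subst h1; simp [blkDiag, hkl]
    · simp [blkDiag, h1]

lemma blkDiag_conjT {n m : ℕ} (X : Tensor Quat n n m) :
    (blkDiag X)ᴴ = blkDiag (fun k => (X k)ᴴ) := by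
  funext p q
  obtain ⟨k, i⟩ := p; obtain ⟨l, j⟩ := q
  rw [Matrix.conjTranspose_apply]
  by_cases h : k = l
  · subst h
    simp [blkDiag, Matrix.conjTranspose_apply]
  · show star (blkDiag X (l, j) (k, i)) = blkDiag _ (k, i) (l, j)
    rw [blkDiag, blkDiag, if_neg (fun hh => h hh.symm), if_neg h, star_zero]

lemma blkDiag_eq_one_iff {n m : ℕ} (X : Tensor Quat n n m) :
    blkDiag X = 1 ↔ ∀ k, X k = 1 := by
  constructor
  · intro h k
    funext i j
    have hh := congrFun (congrFun h (k, i)) (k, j)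
    rw [blkDiag, if_pos rfl] at hh
    rw [hh]
    simp [Matrix.one_apply, Prod.ext_iff]
  · intro h
    funext p q
    obtain ⟨k, i⟩ := p; obtain ⟨l, j⟩ := q
    rw [blkDiag]
    by_cases hkl : k = l
    · subst hkl; rw [if_pos rfl, h k]; simp [Matrix.one_apply, Prod.ext_iff]
    · rw [if_neg hkl]; simp [Matrix.one_apply, Prod.ext_iff, hkl]

lemma unitary_iff_slices {n m : ℕ} (A : Tensor Quat n n m) :
    IsUnitaryT A ↔ ∀ k : Fin m, hatT A k * (hatT A k)ᴴ = 1 ∧ (hatT A k)ᴴ * hatT A k = 1 := by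
  rcases Nat.eq_zero_or_pos m with hm | hm
  · subst hm
    constructor
    · intro _ k; exact absurd k.isLt (by omega)
    · intro _
      constructor <;> (funext k; exact absurd k.isLt (by omega))
  · constructor
    · rintro ⟨h1, h2⟩ k
      constructor
      · have hh : hatT (qtmul A (tConjT A)) k = hatT (idT n m) k := by rw [h2]
        rw [hat_mul hm, hat_star hm, hat_id hm] at hh
        exact hh
      · have hh : hatT (qtmul (tConjT A) A) k = hatT (idT n m) k := by rw [h1]
        rw [hat_mul hm, hat_star hm, hat_id hm] at hh
        exact hh
    · intro h
      constructor
      · apply hat_inj hm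
        intro k
        rw [hat_mul hm, hat_star hm, hat_id hm]
        exact (h k).2
      · apply hat_inj hm
        intro k
        rw [hat_mul hm, hat_star hm, hat_id hm]
        exact (h k).1


/-- `A` is unitary iff `diag(Â)` is a unitary matrix; equivalently,
iff every frontal slice of `Â` is a unitary quaternion matrix. -/
theorem stmt16 {n n₃ : ℕ} (A : Tensor Quat n n n₃) :
    (IsUnitaryT A ↔
      (blkDiag (hatT A) * (blkDiag (hatT A))ᴴ = 1 ∧
       (blkDiag (hatT A))ᴴ * blkDiag (hatT A) = 1)) ∧
    (IsUnitaryT A ↔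
      ∀ k : Fin n₃, hatT A k * (hatT A k)ᴴ = 1 ∧ (hatT A k)ᴴ * hatT A k = 1) := by
  refine ⟨?_, unitary_iff_slices A⟩
  rw [unitary_iff_slices A, blkDiag_conjT, blkDiag_mul, blkDiag_mul,
    blkDiag_eq_one_iff, blkDiag_eq_one_iff, ← forall_and]

end
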